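/- Let X be a finite T₀-space and let A ⊆ X. Let 𝓕(X,A) = {f : X → X continuous : f ≤ Id_X, f ∘ f = f, and A ⊆ f(X)}, partially ordered by the pointwise specialization order, and let Ω(X,A) = {W ⊆ X : W is a dbp–retract of X and A ⊆ W}, partially ordered by set inclusion. Then the map f ↦ f(X) is an order isomorphism from 𝓕(X,A) onto Ω(X,A). -/

import Mathlib

open unitInterval

set_option autoImplicit false

universe u v

/-- The specialization preorder: `x ≤ y` iff every open set containing `y` contains `x`. -/
def specLE {X : Type*} [TopologicalSpace X] (x y : X) : Prop :=
  ∀ U : Set X, IsOpen U → y ∈ U → x ∈ U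

/-- A continuous map `i : A → X` is a (Hurewicz) cofibration iff it has the homotopy
extension property with respect to all topological spaces. -/
def IsCofibration {A : Type*} {X : Type*} [TopologicalSpace A] [TopologicalSpace X]
    (i : C(A, X)) : Prop :=
  ∀ (Z : Type v) [TopologicalSpace Z] (f : C(X, Z)) (H : C(A × I, Z)),
    (∀ a, H (a, 0) = f (i a)) →
    ∃ G : C(X × I, Z),
      (∀ x, G (x, 0) = f x) ∧ ∀ a t, G (i a, t) = H (a, t)

/-- `x` is a down beat point of the subspace `S`:
the set of points of `S` strictly below `x` has a maximum. -/
def IsDownBeatPoint {X : Type*} [TopologicalSpace X] (S : Set X) (x : X) : Prop :=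
  x ∈ S ∧ ∃ m ∈ S, m ≠ x ∧ specLE m x ∧
    ∀ z ∈ S, z ≠ x → specLE z x → specLE z m

/-- `T` is a dbp–retract of `S`: `T` is obtained from `S` by successively
removing down beat points. -/
inductive IsDbpRetract {X : Type*} [TopologicalSpace X] : Set X → Set X → Prop
  | refl (S : Set X) : IsDbpRetract S S
  | step {S T : Set X} (x : X) (hx : IsDownBeatPoint S x)
      (h : IsDbpRetract (S \ {x}) T) : IsDbpRetract S T

/-- The minimal open set containing `x` (in a finite space): the intersection of all
open sets containing `x`. -/
def minOpen {X : Type*} [TopologicalSpace X] (x : X) : Set X :=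
  ⋂₀ {U : Set X | IsOpen U ∧ x ∈ U}


/-!
A continuous `f ≤ id` with `f ∘ f = f` is determined by its image `W`: `f x` is the largest point
of `W` below `x`. If `f(X) ⊆ S`, a point `x` of `S \ f(X)` that is minimal there is a down beat
point of `S`, with `f x` the maximum of the points of `S` below it; removing such points one at a
time reaches `f(X)`. Conversely, if `x` is a down beat point of `f(X)` with maximum `m` below it,
composing `f` with the map sending `x` to `m` is a retraction of the same kind onto `f(X) \ {x}`.
Since continuity of a self-map of a finite space is monotonicity for the specialization order,
this gives the bijection; it preserves the order because `f ≤ g` holds exactly when `g` fixes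
`f(X)`.
-/

open Set

variable {X : Type*} [TopologicalSpace X]

lemma specLE_iff_specializes {x y : X} : specLE x y ↔ x ⤳ y :=
  specializes_iff_forall_open.symm

lemma continuous_of_specializes_map [AlexandrovDiscrete X] {Y : Type*} [TopologicalSpace Y]
    {g : X → Y} (hg : ∀ ⦃a b⦄, a ⤳ b → g a ⤳ g b) : Continuous g := by
  refine continuous_def.2 fun U hU => isOpen_iff_forall_specializes.2 fun a b hab hb => ?_
  exact (hg hab).mem_open hU hb

lemma exists_mem_forall_specializes_eq [Finite X] [T0Space X] {s : Set X} (hs : s.Nonempty) :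
    ∃ x ∈ s, ∀ y ∈ s, y ⤳ x → y = x := by
  -- `specializationOrder` is reversed: `a ≤ b ↔ b ⤳ a`
  let := specializationOrder X
  obtain ⟨x, hx⟩ := s.toFinite.exists_maximal hs
  exact ⟨x, hx.1, fun y hy hyx => hx.eq_of_ge hy hyx⟩

/-- For finite `X` these are the elements of `𝓕(X, ∅)`, continuity being monotonicity for the
specialization order. -/
structure IsLowerRetraction (f : X → X) : Prop where
  specializes_map : ∀ ⦃a b⦄, a ⤳ b → f a ⤳ f b
  map_specializes : ∀ x, f x ⤳ x
  map_map : ∀ x, f (f x) = f x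

namespace IsLowerRetraction

variable {f g : X → X}

lemma apply_eq_self_of_mem_range (hf : IsLowerRetraction f) {y : X} (hy : y ∈ range f) :
    f y = y := by
  obtain ⟨x, rfl⟩ := hy
  exact hf.map_map x

lemma range_subset_range_iff [T0Space X] (hf : IsLowerRetraction f)
    (hg : IsLowerRetraction g) : range f ⊆ range g ↔ ∀ x, f x ⤳ g x := by
  constructor
  · intro hfg x
    simpa only [hg.apply_eq_self_of_mem_range (hfg (mem_range_self x))] using
      hg.specializes_map (hf.map_specializes x)
  · rintro hfg _ ⟨x, rfl⟩
    have hle : f x ⤳ g (f x) := by simpa only [hf.map_map x] using hfg (f x)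
    exact ⟨f x, ((hg.map_specializes (f x)).antisymm hle).eq⟩

lemma eq_of_range_eq [T0Space X] (hf : IsLowerRetraction f) (hg : IsLowerRetraction g)
    (h : range f = range g) : f = g := by
  have hfg := (hf.range_subset_range_iff hg).1 h.le
  have hgf := (hg.range_subset_range_iff hf).1 h.ge
  exact funext fun x => ((hfg x).antisymm (hgf x)).eq

lemma isDownBeatPoint_of_minimal (hf : IsLowerRetraction f) {S : Set X} (hS : range f ⊆ S)
    {x : X} (hx : x ∈ S \ range f) (hmin : ∀ z ∈ S \ range f, z ⤳ x → z = x) :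
    IsDownBeatPoint S x := by
  refine ⟨hx.1, f x, hS (mem_range_self x), fun h => hx.2 ⟨x, h⟩,
    specLE_iff_specializes.2 (hf.map_specializes x), fun z hz hzx hzx' => ?_⟩
  rw [specLE_iff_specializes] at hzx' ⊢
  have hz_range : z ∈ range f := by_contra fun h => hzx (hmin z ⟨hz, h⟩ hzx')
  exact hf.apply_eq_self_of_mem_range hz_range ▸ hf.specializes_map hzx'

lemma isDbpRetract_range [Finite X] [T0Space X] (hf : IsLowerRetraction f) {S : Set X}
    (hS : range f ⊆ S) : IsDbpRetract S (range f) := by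
  induction S using WellFoundedLT.induction with
  | _ S ih =>
    obtain hSf | hne := (S \ range f).eq_empty_or_nonempty
    · rw [hS.antisymm (sdiff_eq_empty.1 hSf)]
      exact .refl _
    obtain ⟨x, hx, hmin⟩ := exists_mem_forall_specializes_eq hne
    refine .step x (hf.isDownBeatPoint_of_minimal hS hx hmin) (ih _ ?_ ?_)
    · exact sdiff_singleton_ssubset.2 hx.1
    · exact subset_sdiff_singleton hS hx.2

/-- Removing a down beat point `x` of the image: `g` is `f` followed by `x ↦ m`, where `m` is
the maximum of the points of `range f` below `x`. -/
lemma exists_range_eq_diff_singleton [DecidableEq X] (hf : IsLowerRetraction f) {x : X}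
    (hx : IsDownBeatPoint (range f) x) :
    ∃ g : X → X, IsLowerRetraction g ∧ range g = range f \ {x} := by
  obtain ⟨-, m, hm, hmx, hmx', hmax⟩ := hx
  rw [specLE_iff_specializes] at hmx'
  set r : X → X := Function.update id x m
  have hr_ne {y : X} (hy : y ≠ x) : r y = y := Function.update_of_ne hy _ _
  have hr_mem {y : X} (hy : y ∈ range f) : r y ∈ range f \ {x} := by
    by_cases hyx : y = x
    · simpa [r, hyx] using ⟨hm, hmx⟩
    · simpa [hr_ne hyx] using ⟨hy, hyx⟩
  have hr_spec (y : X) : r y ⤳ y := by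
    by_cases hyx : y = x
    · simpa [r, hyx] using hmx'
    · rw [hr_ne hyx]
  have hr_mono {a b : X} (ha : a ∈ range f) (hab : a ⤳ b) : r a ⤳ r b := by
    by_cases hbx : b = x
    · by_cases hax : a = x
      · rw [hax, hbx]
      · simpa [r, hbx, hr_ne hax, specLE_iff_specializes] using
          hmax a ha hax (specLE_iff_specializes.2 (hbx ▸ hab))
    · rw [hr_ne hbx]
      exact (hr_spec a).trans hab
  refine ⟨r ∘ f, ⟨fun a b hab => hr_mono (mem_range_self a) (hf.specializes_map hab),
    fun y => (hr_spec (f y)).trans (hf.map_specializes y), fun y => ?_⟩, ?_⟩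
  · obtain ⟨hy, hyx⟩ := hr_mem (mem_range_self y)
    simp only [Function.comp_apply, hf.apply_eq_self_of_mem_range hy, hr_ne hyx]
  · refine (range_subset_iff.2 fun y => hr_mem (mem_range_self y)).antisymm ?_
    rintro _ ⟨⟨y, rfl⟩, hyx⟩
    exact ⟨y, hr_ne hyx⟩

end IsLowerRetraction

lemma IsDbpRetract.exists_isLowerRetraction {S T : Set X} (h : IsDbpRetract S T)
    (hS : ∃ f : X → X, IsLowerRetraction f ∧ range f = S) :
    ∃ g : X → X, IsLowerRetraction g ∧ range g = T := by
  classical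
  induction h with
  | refl => exact hS
  | step x hx _ ih =>
    obtain ⟨f, hf, rfl⟩ := hS
    exact ih (hf.exists_range_eq_diff_singleton hx)

lemma isDbpRetract_univ_iff [Finite X] [T0Space X] {W : Set X} :
    IsDbpRetract univ W ↔ ∃ f : X → X, IsLowerRetraction f ∧ range f = W := by
  constructor
  · intro h
    exact h.exists_isLowerRetraction
      ⟨id, ⟨fun _ _ h => h, fun _ => specializes_rfl, fun _ => rfl⟩, range_id⟩
  · rintro ⟨f, hf, rfl⟩
    exact hf.isDbpRetract_range (subset_univ _)

lemma ContinuousMap.isLowerRetraction {f : C(X, X)} (hle : ∀ x, specLE (f x) x)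
    (hidem : ∀ x, f (f x) = f x) : IsLowerRetraction f :=
  ⟨fun _ _ h => h.map f.continuous, fun x => specLE_iff_specializes.1 (hle x), hidem⟩

/-- Let `X` be a finite T₀-space and `A ⊆ X`. The map `f ↦ f(X)` is an
order isomorphism from `𝓕(X,A)` (idempotent continuous maps `f ≤ Id_X` with `A ⊆ f(X)`,
ordered by the pointwise specialization order) onto `Ω(X,A)` (dbp–retracts of `X`
containing `A`, ordered by inclusion). -/
theorem F_orderIso_Omega
    {X : Type u} [TopologicalSpace X] [Finite X] [T0Space X] (A : Set X) :
    ∃ e : {f : C(X, X) // (∀ x, specLE (f x) x) ∧ (∀ x, f (f x) = f x) ∧ A ⊆ Set.range f} ≃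
          {W : Set X // IsDbpRetract (Set.univ : Set X) W ∧ A ⊆ W},
      (∀ f, (e f : Set X) = Set.range ⇑f.1) ∧
      ∀ f g, (∀ x, specLE (f.1 x) (g.1 x)) ↔
        (e f : Set X) ⊆ (e g : Set X) := by
  have hF (f : {f : C(X, X) // (∀ x, specLE (f x) x) ∧ (∀ x, f (f x) = f x) ∧ A ⊆ range f}) :
      IsLowerRetraction f.1 :=
    f.1.isLowerRetraction f.2.1 f.2.2.1
  let e := fun f => (⟨range f.1, isDbpRetract_univ_iff.2 ⟨_, hF f, rfl⟩, f.2.2.2⟩ :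
    {W : Set X // IsDbpRetract univ W ∧ A ⊆ W})
  have he_inj : Function.Injective e := fun f g h => Subtype.ext <|
    ContinuousMap.coe_injective <| (hF f).eq_of_range_eq (hF g) (congrArg Subtype.val h)
  have he_surj : Function.Surjective e := by
    rintro ⟨W, hW, hAW⟩
    obtain ⟨g, hg, rfl⟩ := isDbpRetract_univ_iff.1 hW
    refine ⟨⟨⟨g, continuous_of_specializes_map hg.specializes_map⟩,
      fun x => specLE_iff_specializes.2 (hg.map_specializes x), hg.map_map, hAW⟩, rfl⟩
  refine ⟨.ofBijective e ⟨he_inj, he_surj⟩, fun _ => rfl, fun f g => ?_⟩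
  simp only [specLE_iff_specializes]
  exact ((hF f).range_subset_range_iff (hF g)).symm
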